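/- Let r ≥ 1 and a : Fin r → ℝ. For every multi-index n ∈ ℕ^r with |n| = n₁ + ⋯ + n_r and every real number x, the inversion formula holds: x^{(|n|)} = Σ_{k₁=0}^{n₁} ⋯ Σ_{k_r=0}^{n_r} (∏_{i=1}^{r} C(n_i,k_i) a_i^{n_i-k_i}) C_k^{(a)}(x). -/

import Mathlib

/-- The falling factorial `x⁽ⁿ⁾ = x(x-1)⋯(x-n+1)`. -/
noncomputable def fallingFactorial (x : ℝ) (n : ℕ) : ℝ :=
  ∏ j ∈ Finset.range n, (x - j)

/-- The multiple Charlier polynomial `C_n^{(a)}(x)` for a multi-index `n : Fin r → ℕ`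
and parameters `a : Fin r → ℝ`. -/
noncomputable def mcharlier {r : ℕ} (a : Fin r → ℝ) (n : Fin r → ℕ) (x : ℝ) : ℝ :=
  ∑ k ∈ Fintype.piFinset (fun i => Finset.range (n i + 1)),
    (∏ i, ((n i).choose (k i) : ℝ) * (-a i) ^ (n i - k i)) * fallingFactorial x (∑ i, k i)

/-! The multiple Charlier polynomial `C_n^{(a)}` is the multivariate binomial transform with
parameter `-a` of `k ↦ x^{(|k|)}`. Binomial transforms compose additively in the parameter
(coordinatewise this is `C(n,k) C(k,m) = C(n,m) C(n-m,k-m)` followed by the binomial theorem),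
and the transform with parameter `0` is the identity, so the transform with parameter `a`
undoes the one with parameter `-a`. -/

open Finset

theorem sum_choose_mul_pow_mul_choose_mul_pow {R : Type*} [CommSemiring R] (a b : R)
    (n m : ℕ) :
    ∑ k ∈ range (n + 1), (n.choose k * a ^ (n - k)) * (k.choose m * b ^ (k - m)) =
      n.choose m * (a + b) ^ (n - m) := by
  rcases lt_or_ge n m with hnm | hmn
  · rw [Nat.choose_eq_zero_of_lt hnm, Nat.cast_zero, zero_mul]
    refine sum_eq_zero fun k hk => ?_
    rw [Nat.choose_eq_zero_of_lt (n := k) (by grind), Nat.cast_zero, zero_mul, mul_zero]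
  have below_m : ∑ k ∈ range m, (n.choose k * a ^ (n - k)) * (k.choose m * b ^ (k - m)) = 0 :=
    sum_eq_zero fun k hk => by
      rw [Nat.choose_eq_zero_of_lt (mem_range.1 hk), Nat.cast_zero, zero_mul, mul_zero]
  rw [← sum_range_add_sum_Ico _ (by omega : m ≤ n + 1), below_m, zero_add,
    sum_Ico_eq_sum_range, add_comm a, add_pow, mul_sum, show n + 1 - m = n - m + 1 by omega]
  refine sum_congr rfl fun j _ => ?_
  have hchoose : (n.choose (m + j) : R) * (m + j).choose m = n.choose m * (n - m).choose j := by
    have := Nat.choose_mul (n := n) (Nat.le_add_right m j)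
    rw [Nat.add_sub_cancel_left] at this
    exact_mod_cast congrArg (Nat.cast (R := R)) this
  rw [show n - (m + j) = n - m - j by omega, Nat.add_sub_cancel_left]
  calc _ = (n.choose (m + j) : R) * (m + j).choose m * (a ^ (n - m - j) * b ^ j) := by ring
    _ = _ := by rw [hchoose]; ring

section BinomialTransform

variable {ι R : Type*} [Fintype ι] [DecidableEq ι] [CommSemiring R]

open Fintype

def binomialTransform (a : ι → R) (f : (ι → ℕ) → R) (n : ι → ℕ) : R :=
  ∑ k ∈ piFinset fun i => range (n i + 1), (∏ i, (n i).choose (k i) * a i ^ (n i - k i)) * f k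

theorem mem_piFinset_range_succ_iff {n k : ι → ℕ} :
    k ∈ piFinset (fun i => range (n i + 1)) ↔ k ≤ n := by
  simp only [mem_piFinset, mem_range, Nat.lt_succ_iff, Pi.le_def]

theorem binomialTransform_eq_sum_of_le (a : ι → R) (f : (ι → ℕ) → R) {k N : ι → ℕ}
    (hkN : k ≤ N) :
    binomialTransform a f k =
      ∑ m ∈ piFinset fun i => range (N i + 1),
        (∏ i, (k i).choose (m i) * a i ^ (k i - m i)) * f m := by
  refine sum_subset (fun m hm => ?_) fun m _ hmk => ?_
  · rw [mem_piFinset_range_succ_iff] at hm ⊢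
    exact hm.trans hkN
  · obtain ⟨i, hi⟩ : ∃ i, k i < m i := by
      simpa [mem_piFinset_range_succ_iff, Pi.le_def] using hmk
    rw [prod_eq_zero (mem_univ i) (by rw [Nat.choose_eq_zero_of_lt hi, Nat.cast_zero, zero_mul]),
      zero_mul]

theorem binomialTransform_binomialTransform (a b : ι → R) (f : (ι → ℕ) → R) (n : ι → ℕ) :
    binomialTransform a (binomialTransform b f) n = binomialTransform (a + b) f n := by
  have hcoeff : ∀ m : ι → ℕ, ∑ k ∈ piFinset fun i => range (n i + 1),
      (∏ i, (n i).choose (k i) * a i ^ (n i - k i)) * ∏ i, (k i).choose (m i) * b i ^ (k i - m i) =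
        ∏ i, (n i).choose (m i) * (a + b) i ^ (n i - m i) := fun m => by
    simp_rw [Pi.add_apply, ← sum_choose_mul_pow_mul_choose_mul_pow, prod_univ_sum,
      prod_mul_distrib]
  calc binomialTransform a (binomialTransform b f) n
      = ∑ k ∈ piFinset fun i => range (n i + 1), ∑ m ∈ piFinset fun i => range (n i + 1),
          (∏ i, (n i).choose (k i) * a i ^ (n i - k i)) *
          ((∏ i, (k i).choose (m i) * b i ^ (k i - m i)) * f m) := by
        refine sum_congr rfl fun k hk => ?_
        rw [binomialTransform_eq_sum_of_le b f (mem_piFinset_range_succ_iff.1 hk), mul_sum]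
    _ = binomialTransform (a + b) f n := by
        rw [sum_comm]
        refine sum_congr rfl fun m _ => ?_
        simp_rw [← mul_assoc, ← sum_mul, hcoeff]

theorem binomialTransform_zero (f : (ι → ℕ) → R) (n : ι → ℕ) :
    binomialTransform 0 f n = f n := by
  rw [binomialTransform, sum_eq_single_of_mem n (mem_piFinset_range_succ_iff.2 le_rfl)]
  · simp
  · intro k hk hkn
    obtain ⟨i, hi⟩ : ∃ i, k i < n i := by
      by_contra! h
      exact hkn (le_antisymm (mem_piFinset_range_succ_iff.1 hk) h)
    rw [prod_eq_zero (mem_univ i) (by simp [Nat.sub_ne_zero_of_lt hi]), zero_mul]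

end BinomialTransform

theorem mcharlier_eq_binomialTransform {r : ℕ} (a : Fin r → ℝ) (n : Fin r → ℕ) (x : ℝ) :
    mcharlier a n x = binomialTransform (-a) (fun k => fallingFactorial x (∑ i, k i)) n :=
  rfl

theorem mcharlier_inversion_general (r : ℕ) (a : Fin r → ℝ) (n : Fin r → ℕ) (x : ℝ) :
    fallingFactorial x (∑ i, n i) =
      ∑ k ∈ Fintype.piFinset (fun i => Finset.range (n i + 1)),
        (∏ i, ((n i).choose (k i) : ℝ) * (a i) ^ (n i - k i)) * mcharlier a k x := by
  simp_rw [mcharlier_eq_binomialTransform]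
  rw [← binomialTransform, binomialTransform_binomialTransform, add_neg_cancel,
    binomialTransform_zero]

/-- Inversion formula for the multiple Charlier polynomials. -/
theorem mcharlier_inversion (r : ℕ) (hr : 1 ≤ r) (a : Fin r → ℝ) (n : Fin r → ℕ) (x : ℝ) :
    fallingFactorial x (∑ i, n i) =
      ∑ k ∈ Fintype.piFinset (fun i => Finset.range (n i + 1)),
        (∏ i, ((n i).choose (k i) : ℝ) * (a i) ^ (n i - k i)) * mcharlier a k x :=
  mcharlier_inversion_general r a n x
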